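/- arXiv:2306.12362 — 3 statements merged into one kernel-verified Lean document; each statement's English description precedes it below -/
import Mathlib

section
/- Let α, β ∈ ℝ with α ≠ 0 and β ≠ 0, and let ψ⁺, ψ⁻ : ℝ² → ℝ be twice continuously differentiable functions such that: (i) there is ε > 0 with ∇ψ⁺(t,0) = ∇ψ⁻(t,0) for all t ∈ (−ε, ε) (the gradients agree along the shared edge through the vertex v = (0,0)); (ii) ∇ψ⁺(t·(β,α)) = 0 for all t ∈ [0, ε) and ∇ψ⁻(t·(−β,α)) = 0 for all t ∈ [0, ε) (the no-slip boundary condition on the two boundary edges meeting at v). Then all second partial derivatives of ψ⁺ and of ψ⁻ vanish at the origin: Hess ψ⁺(0,0) = Hess ψ⁻(0,0) = 0. Consequently, for the velocity fields u^± = curl ψ^± = (∂₂ψ^±, −∂₁ψ^±), one has ∇u⁺(0,0) = ∇u⁻(0,0) = 0. -/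
/-- Classical partial derivative with respect to the first coordinate. -/
noncomputable def pd1 (f : ℝ × ℝ → ℝ) (p : ℝ × ℝ) : ℝ :=
  deriv (fun t => f (t, p.2)) p.1

/-- Classical partial derivative with respect to the second coordinate. -/
noncomputable def pd2 (f : ℝ × ℝ → ℝ) (p : ℝ × ℝ) : ℝ :=
  deriv (fun t => f (p.1, t)) p.2

/-- The Hessian matrix of a scalar function on `ℝ²`. -/
noncomputable def hess (f : ℝ × ℝ → ℝ) (p : ℝ × ℝ) : Matrix (Fin 2) (Fin 2) ℝ :=
  !![pd1 (pd1 f) p, pd2 (pd1 f) p; pd1 (pd2 f) p, pd2 (pd2 f) p]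

/-- The two-dimensional curl `curl ψ = (∂₂ψ, −∂₁ψ)` of a scalar streamfunction. -/
noncomputable def curl2 (ψ : ℝ × ℝ → ℝ) (p : ℝ × ℝ) : ℝ × ℝ :=
  (pd2 ψ p, -(pd1 ψ p))

/-- The gradient matrix of a vector field on `ℝ²`. -/
noncomputable def gradVec (u : ℝ × ℝ → ℝ × ℝ) (p : ℝ × ℝ) : Matrix (Fin 2) (Fin 2) ℝ :=
  !![pd1 (fun q => (u q).1) p, pd2 (fun q => (u q).1) p;
     pd1 (fun q => (u q).2) p, pd2 (fun q => (u q).2) p]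

/-! Write `A = D²ψ⁺(0)` and `B = D²ψ⁻(0)`; both are symmetric by Schwarz's theorem.
Differentiating `∇ψ⁺ = 0` along the ray `t (β, α)` at `t = 0⁺` gives `A (β, α) = 0`, likewise
`B (-β, α) = 0`, and differentiating the edge condition gives `A e₁ = B e₁`. Pairing with `e₁`,
`β A₁₁ + α A₁₂ = 0 = -β A₁₁ + α A₁₂`, so `A₁₂ = A₁₁ = 0`; the second components then force
`A₂₂ = B₂₂ = 0`. The velocity gradient of `curl ψ` only rearranges the entries of `Hess ψ`. -/

open Topology Set

namespace ContinuousLinearMap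

variable {F : Type*} [NormedAddCommGroup F] [NormedSpace ℝ F]

theorem apply_prod_real (L : ℝ × ℝ →L[ℝ] F) (a b : ℝ) :
    L (a, b) = a • L (1, 0) + b • L (0, 1) := by
  rw [← map_smul, ← map_smul, ← map_add]
  simp

theorem ext_prod_real_iff {L M : ℝ × ℝ →L[ℝ] F} :
    L = M ↔ L (1, 0) = M (1, 0) ∧ L (0, 1) = M (0, 1) := by
  refine ⟨fun h => h ▸ ⟨rfl, rfl⟩, fun ⟨h₁, h₂⟩ => ?_⟩
  refine ContinuousLinearMap.ext fun ⟨a, b⟩ => ?_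
  rw [apply_prod_real L, apply_prod_real M, h₁, h₂]

theorem eq_zero_iff_prod_real {L : ℝ × ℝ →L[ℝ] F} :
    L = 0 ↔ L (1, 0) = 0 ∧ L (0, 1) = 0 :=
  ext_prod_real_iff

end ContinuousLinearMap

open ContinuousLinearMap in
theorem symm_pair_eq_zero_of_mirror_kernels {A B : ℝ × ℝ →L[ℝ] ℝ × ℝ →L[ℝ] ℝ} {α β : ℝ}
    (hα : α ≠ 0) (hβ : β ≠ 0) (hA : ∀ v w, A v w = A w v) (hB : ∀ v w, B v w = B w v)
    (hAv : A (β, α) = 0) (hBv : B (-β, α) = 0) (hAB : A (1, 0) = B (1, 0)) :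
    A = 0 ∧ B = 0 := by
  rw [apply_prod_real, eq_zero_iff_prod_real] at hAv hBv
  simp only [add_apply, smul_apply, smul_eq_mul] at hAv hBv
  rw [hA (0, 1) (1, 0)] at hAv
  rw [hB (0, 1) (1, 0)] at hBv
  rw [ext_prod_real_iff] at hAB
  have h₁₂ : A (1, 0) (0, 1) = 0 := by
    refine (mul_eq_zero.mp ?_).resolve_left hα
    linear_combination (hAv.1 + hBv.1 - β * hAB.1 + α * hAB.2) / 2
  have h₁₁ : A (1, 0) (1, 0) = 0 := by
    refine (mul_eq_zero.mp ?_).resolve_left hβ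
    linear_combination hAv.1 - α * h₁₂
  have hA₂₂ : A (0, 1) (0, 1) = 0 := by
    refine (mul_eq_zero.mp ?_).resolve_left hα
    linear_combination hAv.2 - β * h₁₂
  have hB₂₂ : B (0, 1) (0, 1) = 0 := by
    refine (mul_eq_zero.mp ?_).resolve_left hα
    linear_combination hBv.2 - β * hAB.2 + β * h₁₂
  simp only [eq_zero_iff_prod_real]
  refine ⟨⟨⟨h₁₁, h₁₂⟩, ⟨?_, hA₂₂⟩⟩, ⟨⟨?_, ?_⟩, ⟨?_, hB₂₂⟩⟩⟩
  · rw [hA]; exact h₁₂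
  · rw [← hAB.1]; exact h₁₁
  · rw [← hAB.2]; exact h₁₂
  · rw [hB, ← hAB.2]; exact h₁₂

section RayDerivative

variable {E F : Type*} [NormedAddCommGroup E] [NormedSpace ℝ E]
  [NormedAddCommGroup F] [NormedSpace ℝ F]

theorem fderiv_apply_eq_zero_of_eventuallyEq_on_ray {g : E → F} {x v : E}
    (hg : DifferentiableAt ℝ g x) (h : ∀ᶠ t in 𝓝[≥] (0 : ℝ), g (x + t • v) = g x) :
    fderiv ℝ g x v = 0 := by
  have hline : HasDerivAt (fun t : ℝ => x + t • v) v 0 := by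
    simpa using ((hasDerivAt_id (0 : ℝ)).smul_const v).const_add x
  have hray : HasDerivAt (fun t : ℝ => g (x + t • v)) (fderiv ℝ g x v) 0 :=
    hg.hasFDerivAt.comp_hasDerivAt_of_eq 0 hline (by simp)
  have hconst : HasDerivWithinAt (fun t : ℝ => g (x + t • v)) 0 (Ici 0) 0 :=
    (hasDerivWithinAt_const 0 _ (g x)).congr_of_eventuallyEq h (by simp)
  exact (uniqueDiffWithinAt_Ici 0).eq_deriv _ hray.hasDerivWithinAt hconst

end RayDerivative

section PartialDerivatives

variable {f : ℝ × ℝ → ℝ} {p : ℝ × ℝ}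

theorem pd1_eq_fderiv (hf : DifferentiableAt ℝ f p) : pd1 f p = fderiv ℝ f p (1, 0) :=
  (hf.hasFDerivAt.comp_hasDerivAt p.1
    ((hasDerivAt_id p.1).prodMk (hasDerivAt_const p.1 p.2))).deriv

theorem pd2_eq_fderiv (hf : DifferentiableAt ℝ f p) : pd2 f p = fderiv ℝ f p (0, 1) :=
  (hf.hasFDerivAt.comp_hasDerivAt p.2
    ((hasDerivAt_const p.2 p.1).prodMk (hasDerivAt_id p.2))).deriv

theorem fderiv_eq_zero_iff_pd (hf : DifferentiableAt ℝ f p) :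
    fderiv ℝ f p = 0 ↔ pd1 f p = 0 ∧ pd2 f p = 0 := by
  rw [ContinuousLinearMap.eq_zero_iff_prod_real, pd1_eq_fderiv hf, pd2_eq_fderiv hf]

theorem fderiv_eq_fderiv_iff_pd {g : ℝ × ℝ → ℝ} (hf : DifferentiableAt ℝ f p)
    (hg : DifferentiableAt ℝ g p) :
    fderiv ℝ f p = fderiv ℝ g p ↔ pd1 f p = pd1 g p ∧ pd2 f p = pd2 g p := by
  rw [ContinuousLinearMap.ext_prod_real_iff, pd1_eq_fderiv hf, pd2_eq_fderiv hf,
    pd1_eq_fderiv hg, pd2_eq_fderiv hg]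

theorem differentiableAt_fderiv_of_contDiff_two (hf : ContDiff ℝ 2 f) (p : ℝ × ℝ) :
    DifferentiableAt ℝ (fderiv ℝ f) p :=
  (hf.fderiv_right (m := 1) le_rfl).differentiable one_ne_zero p

theorem pd1_fderiv_apply (hf : DifferentiableAt ℝ (fderiv ℝ f) p) (w : ℝ × ℝ) :
    pd1 (fun q => fderiv ℝ f q w) p = fderiv ℝ (fderiv ℝ f) p (1, 0) w := by
  rw [pd1_eq_fderiv (hf.clm_apply (differentiableAt_const w)),
    fderiv_clm_apply hf (differentiableAt_const w)]
  simp

theorem pd2_fderiv_apply (hf : DifferentiableAt ℝ (fderiv ℝ f) p) (w : ℝ × ℝ) :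
    pd2 (fun q => fderiv ℝ f q w) p = fderiv ℝ (fderiv ℝ f) p (0, 1) w := by
  rw [pd2_eq_fderiv (hf.clm_apply (differentiableAt_const w)),
    fderiv_clm_apply hf (differentiableAt_const w)]
  simp

theorem hess_eq_fderiv_fderiv (hf : ContDiff ℝ 2 f) (p : ℝ × ℝ) :
    hess f p = !![fderiv ℝ (fderiv ℝ f) p (1, 0) (1, 0), fderiv ℝ (fderiv ℝ f) p (0, 1) (1, 0);
      fderiv ℝ (fderiv ℝ f) p (1, 0) (0, 1), fderiv ℝ (fderiv ℝ f) p (0, 1) (0, 1)] := by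
  have hd : Differentiable ℝ f := hf.differentiable two_ne_zero
  have hd2 := differentiableAt_fderiv_of_contDiff_two hf p
  have h1 : pd1 f = fun q => fderiv ℝ f q (1, 0) := funext fun q => pd1_eq_fderiv (hd q)
  have h2 : pd2 f = fun q => fderiv ℝ f q (0, 1) := funext fun q => pd2_eq_fderiv (hd q)
  simp only [hess, h1, h2, pd1_fderiv_apply hd2, pd2_fderiv_apply hd2]

theorem hess_eq_zero_of_fderiv_fderiv_eq_zero (hf : ContDiff ℝ 2 f)
    (h : fderiv ℝ (fderiv ℝ f) p = 0) : hess f p = 0 := by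
  rw [hess_eq_fderiv_fderiv hf, h]
  ext i j; fin_cases i <;> fin_cases j <;> rfl

theorem gradVec_curl2 (ψ : ℝ × ℝ → ℝ) (p : ℝ × ℝ) :
    gradVec (curl2 ψ) p = !![hess ψ p 1 0, hess ψ p 1 1; -hess ψ p 0 0, -hess ψ p 0 1] := by
  simp [gradVec, curl2, hess, pd1, pd2, deriv.fun_neg]

theorem gradVec_curl2_eq_zero_of_hess_eq_zero {ψ : ℝ × ℝ → ℝ} (h : hess ψ p = 0) :
    gradVec (curl2 ψ) p = 0 := by
  rw [gradVec_curl2, h]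
  ext i j; fin_cases i <;> fin_cases j <;> simp

end PartialDerivatives

section Streamfunction

variable {ψ φ : ℝ × ℝ → ℝ} {ε : ℝ}

theorem fderiv_fderiv_apply_eq_zero_of_pd_eq_zero_on_ray (hψ : ContDiff ℝ 2 ψ) (hε : 0 < ε)
    {v : ℝ × ℝ} (h : ∀ t ∈ Ico (0 : ℝ) ε, pd1 ψ (t • v) = 0 ∧ pd2 ψ (t • v) = 0) :
    fderiv ℝ (fderiv ℝ ψ) 0 v = 0 := by
  have hzero : ∀ t ∈ Ico (0 : ℝ) ε, fderiv ℝ ψ (t • v) = 0 := fun t ht =>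
    (fderiv_eq_zero_iff_pd ((hψ.differentiable two_ne_zero) _)).2 (h t ht)
  refine fderiv_apply_eq_zero_of_eventuallyEq_on_ray
    (differentiableAt_fderiv_of_contDiff_two hψ 0) ?_
  filter_upwards [Ico_mem_nhdsGE hε] with t ht
  rw [zero_add, hzero t ht, ← zero_smul ℝ v, hzero 0 ⟨le_rfl, hε⟩]

theorem fderiv_fderiv_apply_eq_of_pd_eq_on_axis (hψ : ContDiff ℝ 2 ψ) (hφ : ContDiff ℝ 2 φ)
    (hε : 0 < ε)
    (h : ∀ t ∈ Ioo (-ε) ε, pd1 ψ (t, 0) = pd1 φ (t, 0) ∧ pd2 ψ (t, 0) = pd2 φ (t, 0)) :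
    fderiv ℝ (fderiv ℝ ψ) 0 (1, 0) = fderiv ℝ (fderiv ℝ φ) 0 (1, 0) := by
  have hψ' := differentiableAt_fderiv_of_contDiff_two hψ 0
  have hφ' := differentiableAt_fderiv_of_contDiff_two hφ 0
  have hdiff : ∀ t ∈ Ioo (-ε) ε, fderiv ℝ ψ (t, 0) = fderiv ℝ φ (t, 0) := fun t ht =>
    (fderiv_eq_fderiv_iff_pd (hψ.differentiable two_ne_zero _)
      (hφ.differentiable two_ne_zero _)).2 (h t ht)
  have hdiff₀ : fderiv ℝ ψ 0 = fderiv ℝ φ 0 := hdiff 0 ⟨neg_neg_of_pos hε, hε⟩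
  have key := fderiv_apply_eq_zero_of_eventuallyEq_on_ray (hψ'.sub hφ') (v := (1, 0)) <| by
    filter_upwards [mem_nhdsWithin_of_mem_nhds (Ioo_mem_nhds (neg_neg_of_pos hε) hε)]
      with t ht
    simp [hdiff t ht, hdiff₀]
  rwa [fderiv_sub hψ' hφ', sub_apply, sub_eq_zero] at key

end Streamfunction

/-- Counterexample: for two C² streamfunction pieces whose gradients agree along the shared
edge through the vertex and vanish along the two boundary edges `t·(β,α)`, `t·(−β,α)`,
the full Hessians (hence the velocity gradients of `u^± = curl ψ^±`) vanish at the vertex. -/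
theorem overconstrained_strain_at_vertex
    (α β : ℝ) (hα : α ≠ 0) (hβ : β ≠ 0)
    (ψp ψm : ℝ × ℝ → ℝ) (hψp : ContDiff ℝ 2 ψp) (hψm : ContDiff ℝ 2 ψm)
    (ε : ℝ) (hε : 0 < ε)
    (hedge : ∀ t ∈ Set.Ioo (-ε) ε,
      pd1 ψp (t, 0) = pd1 ψm (t, 0) ∧ pd2 ψp (t, 0) = pd2 ψm (t, 0))
    (hbcp : ∀ t ∈ Set.Ico (0 : ℝ) ε,
      pd1 ψp (t • ((β, α) : ℝ × ℝ)) = 0 ∧ pd2 ψp (t • ((β, α) : ℝ × ℝ)) = 0)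
    (hbcm : ∀ t ∈ Set.Ico (0 : ℝ) ε,
      pd1 ψm (t • ((-β, α) : ℝ × ℝ)) = 0 ∧ pd2 ψm (t • ((-β, α) : ℝ × ℝ)) = 0) :
    hess ψp (0, 0) = 0 ∧ hess ψm (0, 0) = 0 ∧
    gradVec (curl2 ψp) (0, 0) = 0 ∧ gradVec (curl2 ψm) (0, 0) = 0 := by
  obtain ⟨hp, hm⟩ : fderiv ℝ (fderiv ℝ ψp) 0 = 0 ∧ fderiv ℝ (fderiv ℝ ψm) 0 = 0 :=
    symm_pair_eq_zero_of_mirror_kernels hα hβ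
      (hψp.contDiffAt.isSymmSndFDerivAt (by simp))
      (hψm.contDiffAt.isSymmSndFDerivAt (by simp))
      (fderiv_fderiv_apply_eq_zero_of_pd_eq_zero_on_ray hψp hε hbcp)
      (fderiv_fderiv_apply_eq_zero_of_pd_eq_zero_on_ray hψm hε hbcm)
      (fderiv_fderiv_apply_eq_of_pd_eq_on_axis hψp hψm hε hedge)
  rw [Prod.mk_zero_zero]
  have hessp := hess_eq_zero_of_fderiv_fderiv_eq_zero hψp hp
  have hessm := hess_eq_zero_of_fderiv_fderiv_eq_zero hψm hm
  exact ⟨hessp, hessm, gradVec_curl2_eq_zero_of_hess_eq_zero hessp,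
    gradVec_curl2_eq_zero_of_hess_eq_zero hessm⟩
end

section
/- Let α⁺, α⁻ ∈ ℝ with α⁺ + α⁻ ≠ 0, and set w⁺ = (1, α⁺) and w⁻ = (−1, α⁻) in ℝ². Let M⁺, M⁻ be real 2×2 matrices satisfying: trace(M⁺) = 0 and trace(M⁻) = 0; M⁺ w⁺ = 0 and M⁻ w⁻ = 0; and the second columns agree, M⁺ (0,1)ᵗ = M⁻ (0,1)ᵗ. Then M⁺ = 0 and M⁻ = 0. -/
/-- If two trace-free 2×2 matrices `M⁺, M⁻` kill the edge directions `w⁺ = (1, α⁺)` and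
`w⁻ = (−1, α⁻)` respectively, have equal second columns, and `α⁺ + α⁻ ≠ 0`, then both
matrices vanish. -/
theorem gradients_vanish_at_vertex
    (αp αm : ℝ) (hα : αp + αm ≠ 0)
    (Mp Mm : Matrix (Fin 2) (Fin 2) ℝ)
    (htrp : Mp.trace = 0) (htrm : Mm.trace = 0)
    (hwp : Mp.mulVec ![1, αp] = 0) (hwm : Mm.mulVec ![-1, αm] = 0)
    (hcol : Mp.mulVec ![0, 1] = Mm.mulVec ![0, 1]) :
    Mp = 0 ∧ Mm = 0 := by
  have hp0 := congrFun hwp 0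
  have hp1 := congrFun hwp 1
  have hm0 := congrFun hwm 0
  have hm1 := congrFun hwm 1
  have hc0 := congrFun hcol 0
  have hc1 := congrFun hcol 1
  simp [Matrix.mulVec, dotProduct, Fin.sum_univ_two, Matrix.trace,
    Matrix.diag, Fin.sum_univ_two] at hp0 hp1 hm0 hm1 hc0 hc1 htrp htrm
  have h01 : Mp 0 1 = 0 := by
    rcases mul_eq_zero.mp (show (αp + αm) * Mp 0 1 = 0 by
      linear_combination hp0 + αm * hc0 + hm0 + htrm - htrp + hc1) with h | h
    · exact absurd h hα
    · exact h
  have h00 : Mp 0 0 = 0 := by linear_combination hp0 - αp * h01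
  have h11 : Mp 1 1 = 0 := by linarith
  have h10 : Mp 1 0 = 0 := by linear_combination hp1 - αp * h11
  have hf : Mm 0 1 = 0 := by linarith
  have hh : Mm 1 1 = 0 := by linarith
  have he : Mm 0 0 = 0 := by linear_combination -hm0 + αm * hf
  have hg : Mm 1 0 = 0 := by linear_combination -hm1 + αm * hh
  constructor <;> ext i j <;> fin_cases i <;> fin_cases j <;>
    simpa using ‹_›
end

section
/- For α⁺, α⁻ ∈ ℝ, the homogeneous linear system A D = 0, where A is the 8×8 matrix with rows (1,0,0,1,0,0,0,0), (1,α⁺,0,0,0,0,0,0), (0,0,1,α⁺,0,0,0,0), (0,1,0,0,0,1,0,0), (0,0,0,1,0,0,0,1), (0,0,0,0,1,0,0,1), (0,0,0,0,−1,α⁻,0,0), (0,0,0,0,0,0,−1,α⁻), has a nonzero solution D ∈ ℝ⁸ if and only if α⁺ + α⁻ = 0, i.e. if and only if the vectors w⁺ = (1, α⁺) and w⁻ = (−1, α⁻) are linearly dependent. -/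
/-!
Eliminating along the equations, every coordinate of a solution `D` is a fixed multiple
of `D 1`, except that `D 3` is reached twice: through the `+` piece `D 3 = α⁺ D 1`, through
the `−` piece `D 3 = -α⁻ D 1`. So the solutions are the multiples `c • vertexKernelVec α⁺`
with `(α⁺ + α⁻) c = 0`.
-/

open Matrix

def vertexMatrix (αp αm : ℝ) : Matrix (Fin 8) (Fin 8) ℝ :=
  !![1, 0, 0, 1, 0, 0, 0, 0;
     1, αp, 0, 0, 0, 0, 0, 0;
     0, 0, 1, αp, 0, 0, 0, 0;
     0, 1, 0, 0, 0, 1, 0, 0;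
     0, 0, 0, 1, 0, 0, 0, 1;
     0, 0, 0, 0, 1, 0, 0, 1;
     0, 0, 0, 0, -1, αm, 0, 0;
     0, 0, 0, 0, 0, 0, -1, αm]

def vertexKernelVec (αp : ℝ) : Fin 8 → ℝ :=
  ![-αp, 1, -αp ^ 2, αp, αp, -1, αp ^ 2, -αp]

section

variable {αp αm : ℝ}

theorem vertexMatrix_mulVec_eq_zero_iff_equations (D : Fin 8 → ℝ) :
    vertexMatrix αp αm *ᵥ D = 0 ↔
      D 0 + D 3 = 0 ∧ D 0 + αp * D 1 = 0 ∧ D 2 + αp * D 3 = 0 ∧ D 1 + D 5 = 0 ∧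
        D 3 + D 7 = 0 ∧ D 4 + D 7 = 0 ∧ -D 4 + αm * D 5 = 0 ∧ -D 6 + αm * D 7 = 0 := by
  simp [funext_iff, Fin.forall_fin_succ, vertexMatrix, dotProduct, Fin.sum_univ_eight]

theorem vertexMatrix_mulVec_eq_zero_iff (D : Fin 8 → ℝ) :
    vertexMatrix αp αm *ᵥ D = 0 ↔
      ∃ c, D = c • vertexKernelVec αp ∧ (αp + αm) * c = 0 := by
  rw [vertexMatrix_mulVec_eq_zero_iff_equations]
  constructor
  · rintro ⟨e0, e1, e2, e3, e4, e5, e6, e7⟩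
    have hc : (αp + αm) * D 1 = 0 := by
      linear_combination e1 - e0 + e4 - e5 - e6 + αm * e3
    refine ⟨D 1, funext fun i => ?_, hc⟩
    fin_cases i <;> simp only [Fin.zero_eta, Fin.mk_one, Fin.reduceFinMk, Fin.isValue,
      vertexKernelVec, Pi.smul_apply, cons_val, cons_val_zero, cons_val_one, smul_eq_mul, mul_one]
    · linear_combination e1
    · linear_combination e2 - αp * e0 + αp * e1
    · linear_combination e0 - e1
    · linear_combination e5 - e4 + e0 - e1
    · linear_combination e3
    · linear_combination -e7 + αm * e4 - αm * e0 + αm * e1 - αp * hc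
    · linear_combination e4 - e0 + e1
  · rintro ⟨c, rfl, hc⟩
    simp only [vertexKernelVec, Fin.isValue, Pi.smul_apply, cons_val_zero, smul_eq_mul, mul_neg,
      cons_val, neg_add_cancel, cons_val_one, mul_one, add_neg_cancel, true_and]
    exact ⟨by ring, by ring, by linear_combination -hc, by linear_combination -αp * hc⟩

theorem vertexKernelVec_ne_zero : vertexKernelVec αp ≠ 0 :=
  fun h => by simpa [vertexKernelVec] using congrFun h 1

end

/-- The vertex constraint system `A D = 0` has a nonzero solution `D ∈ ℝ⁸` if and only if
`α⁺ + α⁻ = 0`, i.e. iff `w⁺ = (1, α⁺)` and `w⁻ = (−1, α⁻)` are linearly dependent. -/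
theorem nonzero_solution_iff_edges_dependent (αp αm : ℝ) :
    (∃ D : Fin 8 → ℝ, D ≠ 0 ∧
      (!![(1:ℝ), 0, 0, 1, 0, 0, 0, 0;
          1, αp, 0, 0, 0, 0, 0, 0;
          0, 0, 1, αp, 0, 0, 0, 0;
          0, 1, 0, 0, 0, 1, 0, 0;
          0, 0, 0, 1, 0, 0, 0, 1;
          0, 0, 0, 0, 1, 0, 0, 1;
          0, 0, 0, 0, -1, αm, 0, 0;
          0, 0, 0, 0, 0, 0, -1, αm]).mulVec D = 0) ↔ αp + αm = 0 := by
  change (∃ D, D ≠ 0 ∧ vertexMatrix αp αm *ᵥ D = 0) ↔ _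
  simp only [vertexMatrix_mulVec_eq_zero_iff]
  constructor
  · rintro ⟨D, hD, c, rfl, hc⟩
    have hc0 : c ≠ 0 := by rintro rfl; simp at hD
    exact (mul_eq_zero.1 hc).resolve_right hc0
  · intro h
    exact ⟨vertexKernelVec αp, vertexKernelVec_ne_zero, 1, (one_smul ℝ _).symm, by simp [h]⟩
end
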